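/- For all integers x, t with t > |x| and x + t even: a₁(xε, tε, m, ε) = (1+m²ε²)^{(1−t)/2} · Σ_{r=0}^{(t−|x|)/2} (−1)^r · C((x+t−2)/2, r) · C((t−x−2)/2, r) · (mε)^{2r+1}, and a₂(xε, tε, m, ε) = (1+m²ε²)^{(1−t)/2} · Σ_{r=1}^{(t−|x|)/2} (−1)^r · C((x+t−2)/2, r) · C((t−x−2)/2, r−1) · (mε)^{2r}, where C(n,k) denotes the binomial coefficient. -/

import Mathlib

/-!
Cut a path before its last move: the last move adds a turn exactly when it differs from the
previous one. Hence the turn polynomials `∑ z ^ turns` of paths that start to the right, have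
`a + 1` right and `b + 1` left moves and end with a right (resp. left) move satisfy a Pascal-type
recursion in `a` and `b`. Such a path has `2r + 2` (resp. `2r + 1`) turns, and choosing the
lengths of its runs gives `C(a, r + 1) C(b, r)` (resp. `C(a, r) C(b, r)`) paths; these closed
forms satisfy the same recursion by Pascal's rule. Finally `i (-imε) ^ k` is real for odd `k` and
imaginary for even `k`, which separates `a₁` from `a₂`.
-/

open scoped BigOperators

/-- The final x-coordinate of a checker path from `(0,0)` encoded by its sequence of moves
(`true` = move `(1,1)`, `false` = move `(-1,1)`). -/
def moveEndpoint {n : ℕ} (d : Fin n → Bool) : ℤ :=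
  ∑ k, (if d k then (1 : ℤ) else -1)

/-- The number of turns of a checker path encoded by its sequence of moves. -/
def nturns {n : ℕ} (d : Fin n → Bool) : ℕ :=
  ((List.ofFn d).zip (List.ofFn d).tail).countP fun p => p.1 != p.2

/-- Checker paths from `(0,0)` to `(x,t)` whose first step is to `(1,1)`,
encoded by their sequences of moves. -/
def cpaths (x t : ℤ) : Finset (Fin t.toNat → Bool) :=
  Finset.univ.filter fun d => moveEndpoint d = x ∧ (List.ofFn d).headI = true

/-- Feynman checkers amplitude with mass: `a(x·ε, t·ε, m, ε)` written in lattice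
coordinates, i.e. `am m ε x t = (1+m²ε²)^((1-t)/2) * i * ∑ₛ (-i·m·ε)^turns(s)`. -/
noncomputable def am (m ε : ℝ) (x t : ℤ) : ℂ :=
  (Real.sqrt (1 + m ^ 2 * ε ^ 2) : ℂ) ^ (1 - t) * Complex.I *
    ∑ d ∈ cpaths x t, (-Complex.I * (m * ε)) ^ nturns d

open Finset

def turnCount (l : List Bool) : ℕ :=
  (l.zip l.tail).countP fun p => p.1 != p.2

lemma turnCount_cons_cons (a b : Bool) (l : List Bool) :
    turnCount (a :: b :: l) = (if a != b then 1 else 0) + turnCount (b :: l) := by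
  simp only [turnCount, List.tail_cons, List.zip_cons_cons, List.countP_cons]
  omega

lemma turnCount_append_singleton (l : List Bool) (c : Bool) :
    turnCount (l ++ [c]) = turnCount l + if l.getLastD c != c then 1 else 0 := by
  induction l with
  | nil => simp [turnCount]
  | cons a l ih =>
    cases l with
    | nil => simp [turnCount]
    | cons b l =>
      simp only [List.cons_append, List.getLastD_cons] at ih ⊢
      rw [turnCount_cons_cons, ih, turnCount_cons_cons]
      ring

lemma turnCount_replicate (n : ℕ) (c : Bool) : turnCount (List.replicate n c) = 0 := by
  refine List.countP_eq_zero.2 fun p hp => ?_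
  obtain ⟨h1, h2⟩ := List.of_mem_zip hp
  rw [List.eq_of_mem_replicate h1, List.eq_of_mem_replicate (List.mem_of_mem_tail h2)]
  simp

lemma nturns_snoc {n : ℕ} (e : Fin (n + 1) → Bool) (c : Bool) :
    nturns (Fin.snoc e c : Fin (n + 2) → Bool) =
      nturns e + if e (Fin.last n) != c then 1 else 0 := by
  have hlast : (List.ofFn e).getLastD c = e (Fin.last n) := by
    rw [List.ofFn_succ', List.concat_eq_append, List.getLastD_concat]
  change turnCount _ = turnCount _ + _
  rw [List.ofFn_succ']
  simp only [Fin.snoc_castSucc, Fin.snoc_last, List.concat_eq_append]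
  rw [turnCount_append_singleton, hlast]

lemma nturns_const (n : ℕ) (c : Bool) : nturns (fun _ : Fin n => c) = 0 := by
  rw [nturns, List.ofFn_const]
  exact turnCount_replicate n c

lemma moveEndpoint_snoc {n : ℕ} (e : Fin n → Bool) (c : Bool) :
    moveEndpoint (Fin.snoc e c : Fin (n + 1) → Bool) = moveEndpoint e + if c then 1 else -1 := by
  simp [moveEndpoint, Fin.sum_univ_castSucc]

lemma moveEndpoint_eq_iff_forall_true {n : ℕ} (d : Fin n → Bool) :
    moveEndpoint d = n ↔ ∀ k, d k = true := by
  have hle : ∀ k ∈ univ, (if d k then (1 : ℤ) else -1) ≤ 1 := by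
    intro k _; split <;> norm_num
  have := sum_eq_sum_iff_of_le hle
  simp only [sum_const, card_univ, Fintype.card_fin, nsmul_eq_mul, mul_one] at this
  rw [moveEndpoint, this]
  refine forall_congr' fun k => ?_
  cases d k <;> simp

lemma moveEndpoint_eq_neg_iff_forall_false {n : ℕ} (d : Fin n → Bool) :
    moveEndpoint d = -n ↔ ∀ k, d k = false := by
  have hle : ∀ k ∈ univ, (-1 : ℤ) ≤ if d k then (1 : ℤ) else -1 := by
    intro k _; split <;> norm_num
  have := sum_eq_sum_iff_of_le hle
  simp only [sum_const, card_univ, Fintype.card_fin, nsmul_eq_mul, mul_neg, mul_one] at this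
  rw [moveEndpoint, eq_comm, this]
  refine forall_congr' fun k => ?_
  cases d k <;> simp

section TurnSum

variable {R : Type*} [CommSemiring R]

def turnSum (n : ℕ) (x : ℤ) (b : Bool) (z : R) : R :=
  ∑ d : Fin (n + 1) → Bool with moveEndpoint d = x ∧ d 0 = true ∧ d (Fin.last n) = b,
    z ^ nturns d

lemma turnSum_succ (n : ℕ) (x : ℤ) (b : Bool) (z : R) :
    turnSum (n + 1) x b z =
      turnSum n (x - if b then 1 else -1) b z + z * turnSum n (x - if b then 1 else -1) (!b) z := by
  simp only [turnSum, sum_filter, mul_sum, ← sum_add_distrib]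
  rw [← (Fin.snocEquiv fun _ => Bool).sum_comp, Fintype.sum_prod_type, sum_comm]
  refine sum_congr rfl fun e _ => ?_
  have hsnoc : ∀ c, (Fin.snocEquiv fun _ => Bool) (c, e) = Fin.snoc e c := fun _ => rfl
  have h0 : ∀ c, (Fin.snoc e c : Fin (n + 2) → Bool) 0 = e 0 := fun _ =>
    Fin.snoc_castSucc (i := 0) ..
  simp only [hsnoc, Fintype.sum_bool, moveEndpoint_snoc, nturns_snoc, h0, ← eq_sub_iff_add_eq]
  cases b <;> cases e (Fin.last n) <;> simp [pow_succ, mul_comm]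

lemma turnSum_max_endpoint (n : ℕ) (b : Bool) (z : R) :
    turnSum n (n + 1 : ℕ) b z = if b then 1 else 0 := by
  rw [turnSum, sum_filter, sum_eq_single fun _ => true]
  · cases b <;> simp [moveEndpoint, nturns_const]
  · rintro d - hd
    rw [if_neg]
    rintro ⟨h, -, -⟩
    exact hd (funext ((moveEndpoint_eq_iff_forall_true d).1 h))
  · simp

lemma turnSum_min_endpoint (n : ℕ) (b : Bool) (z : R) :
    turnSum n (-(n + 1 : ℕ)) b z = 0 := by
  refine sum_eq_zero fun d hd => ?_
  obtain ⟨h, h0, -⟩ := (mem_filter.1 hd).2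
  simp [(moveEndpoint_eq_neg_iff_forall_false d).1 h] at h0

def oddTurnSum (a b : ℕ) (z : R) : R :=
  ∑ r ∈ range (a + 1), (a.choose r * b.choose r : R) * z ^ (2 * r + 1)

def evenTurnSum (a b : ℕ) (z : R) : R :=
  ∑ r ∈ range a, (a.choose (r + 1) * b.choose r : R) * z ^ (2 * r + 2)

lemma oddTurnSum_zero_right (a : ℕ) (z : R) : oddTurnSum a 0 z = z := by
  simp [oddTurnSum, sum_range_succ']

lemma evenTurnSum_succ_left (a b : ℕ) (z : R) :
    evenTurnSum (a + 1) b z = evenTurnSum a b z + z * oddTurnSum a b z := by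
  rw [evenTurnSum, evenTurnSum, oddTurnSum, mul_sum, sum_range_succ, sum_range_succ _ a,
    ← add_assoc, ← sum_add_distrib]
  congr 1
  · refine sum_congr rfl fun r _ => ?_
    rw [Nat.choose_succ_succ']
    push_cast
    ring
  · simp only [Nat.choose_self]
    ring

lemma oddTurnSum_succ_right (a b : ℕ) (z : R) :
    oddTurnSum a (b + 1) z = oddTurnSum a b z + z * evenTurnSum a b z := by
  rw [oddTurnSum, oddTurnSum, evenTurnSum, mul_sum, sum_range_succ', sum_range_succ',
    add_right_comm, ← sum_add_distrib]
  congr 1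
  · refine sum_congr rfl fun r _ => ?_
    rw [Nat.choose_succ_succ']
    push_cast
    ring
  · simp

theorem turnSum_eq_evenTurnSum_and_oddTurnSum (a b : ℕ) (z : R) :
    turnSum (a + b + 1) (a - b) true z = evenTurnSum a b z ∧
      turnSum (a + b + 1) (a - b) false z = oddTurnSum a b z := by
  induction h : a + b using Nat.strong_induction_on generalizing a b with
  | _ s ih =>
  subst h
  constructor
  · cases a with
    | zero =>
      have hx : ((0 : ℕ) : ℤ) - b - 1 = -(b + 1 : ℕ) := by push_cast; ring
      rw [zero_add, turnSum_succ, if_pos rfl, hx, turnSum_min_endpoint, turnSum_min_endpoint]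
      simp [evenTurnSum]
    | succ a =>
      obtain ⟨ihR, ihL⟩ := ih (a + b) (by omega) a b rfl
      have hx : ((a + 1 : ℕ) : ℤ) - b - 1 = a - b := by push_cast; ring
      rw [add_right_comm a, turnSum_succ, if_pos rfl, hx, Bool.not_true, ihR, ihL,
        evenTurnSum_succ_left]
  · cases b with
    | zero =>
      have hx : (a : ℤ) - (0 : ℕ) - -1 = (a + 1 : ℕ) := by push_cast; ring
      rw [add_zero, turnSum_succ, if_neg Bool.false_ne_true, hx, turnSum_max_endpoint,
        turnSum_max_endpoint]
      simp [oddTurnSum_zero_right]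
    | succ b =>
      obtain ⟨ihR, ihL⟩ := ih (a + b) (by omega) a b rfl
      have hx : (a : ℤ) - (b + 1 : ℕ) - -1 = a - b := by push_cast; ring
      rw [← add_assoc, turnSum_succ, if_neg Bool.false_ne_true, hx, Bool.not_false, ihR, ihL,
        oddTurnSum_succ_right]

lemma sum_cpaths_pow_nturns (n : ℕ) (x : ℤ) (z : R) :
    ∑ d ∈ cpaths x (n + 1 : ℕ), z ^ nturns d = turnSum n x true z + turnSum n x false z := by
  have hhead : ∀ d : Fin (n + 1) → Bool, (List.ofFn d).headI = d 0 := fun d => by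
    rw [List.ofFn_succ]; rfl
  change ∑ d ∈ univ.filter _, _ = _
  simp only [turnSum, sum_filter, ← sum_add_distrib, hhead]
  refine sum_congr rfl fun d _ => ?_
  cases d (Fin.last n) <;> simp

end TurnSum

section Amplitude

open Complex

lemma I_mul_oddTurnSum (a b : ℕ) (w : ℝ) :
    I * oddTurnSum a b (-I * w) =
      ((∑ r ∈ range (a + 1),
        (-1) ^ r * (a.choose r : ℝ) * (b.choose r : ℝ) * w ^ (2 * r + 1) : ℝ) : ℂ) := by
  rw [oddTurnSum, mul_sum]
  push_cast
  refine sum_congr rfl fun r _ => ?_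
  rw [mul_pow, pow_succ, pow_mul, neg_pow_two, I_sq]
  ring_nf
  rw [I_sq]
  ring

lemma I_mul_evenTurnSum (a b : ℕ) (w : ℝ) :
    I * evenTurnSum a b (-I * w) =
      ((∑ r ∈ range a,
        (-1) ^ (r + 1) * (a.choose (r + 1) : ℝ) * (b.choose r : ℝ) * w ^ (2 * r + 2) : ℝ) : ℂ) *
        I := by
  rw [evenTurnSum, mul_sum]
  push_cast
  rw [sum_mul]
  refine sum_congr rfl fun r _ => ?_
  rw [mul_pow, show 2 * r + 2 = 2 * (r + 1) by ring, pow_mul, neg_pow_two, I_sq]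
  ring

lemma am_eq_ofReal_mul (m ε : ℝ) (a b : ℕ) :
    am m ε (a - b) (a + b + 2 : ℕ) =
      ((Real.sqrt (1 + m ^ 2 * ε ^ 2) ^ (1 - ((a + b + 2 : ℕ) : ℤ)) : ℝ) : ℂ) *
        (I * oddTurnSum a b (-I * (m * ε : ℝ)) + I * evenTurnSum a b (-I * (m * ε : ℝ))) := by
  rw [am, sum_cpaths_pow_nturns (a + b + 1), (turnSum_eq_evenTurnSum_and_oddTurnSum a b _).1,
    (turnSum_eq_evenTurnSum_and_oddTurnSum a b _).2]
  push_cast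
  ring

lemma am_re_eq (m ε : ℝ) (a b : ℕ) :
    (am m ε (a - b) (a + b + 2 : ℕ)).re =
      Real.sqrt (1 + m ^ 2 * ε ^ 2) ^ (1 - ((a + b + 2 : ℕ) : ℤ)) *
        ∑ r ∈ range (min a b + 1 + 1),
          (-1 : ℝ) ^ r * (a.choose r : ℝ) * (b.choose r : ℝ) * (m * ε) ^ (2 * r + 1) := by
  have hvanish : ∀ r ≥ min a b + 1,
      (-1 : ℝ) ^ r * (a.choose r : ℝ) * (b.choose r : ℝ) * (m * ε) ^ (2 * r + 1) = 0 := by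
    intro r hr
    rcases min_lt_iff.1 (Nat.lt_of_succ_le hr) with h | h <;> simp [Nat.choose_eq_zero_of_lt h]
  rw [am_eq_ofReal_mul, I_mul_oddTurnSum, I_mul_evenTurnSum]
  simp only [re_ofReal_mul, add_re, ofReal_re, I_re, mul_zero, add_zero]
  rw [eventually_constant_sum hvanish (n := a + 1) (by omega),
    eventually_constant_sum hvanish (n := min a b + 1 + 1) (by omega)]

lemma am_im_eq (m ε : ℝ) (a b : ℕ) :
    (am m ε (a - b) (a + b + 2 : ℕ)).im =
      Real.sqrt (1 + m ^ 2 * ε ^ 2) ^ (1 - ((a + b + 2 : ℕ) : ℤ)) *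
        ∑ r ∈ Icc 1 (min a b + 1),
          (-1 : ℝ) ^ r * (a.choose r : ℝ) * (b.choose (r - 1) : ℝ) * (m * ε) ^ (2 * r) := by
  have hvanish : ∀ r ≥ min a (b + 1),
      (-1 : ℝ) ^ (r + 1) * (a.choose (r + 1) : ℝ) * (b.choose r : ℝ) *
        (m * ε) ^ (2 * r + 2) = 0 := by
    intro r hr
    rcases min_le_iff.1 hr with h | h
    · simp [Nat.choose_eq_zero_of_lt (Nat.lt_succ_of_le h)]
    · simp [Nat.choose_eq_zero_of_lt (Nat.lt_of_succ_le h)]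
  rw [am_eq_ofReal_mul, I_mul_oddTurnSum, I_mul_evenTurnSum]
  simp only [im_ofReal_mul, add_im, ofReal_im, I_im, mul_one, zero_add]
  rw [eventually_constant_sum hvanish (n := a) (by omega),
    ← eventually_constant_sum hvanish (n := min a b + 1) (by omega), ← Ico_add_one_right_eq_Icc,
    sum_Ico_eq_sum_range, add_tsub_cancel_right]
  congr 1
  refine sum_congr rfl fun r _ => ?_
  rw [add_comm 1 r, add_tsub_cancel_right]
  ring

end Amplitude

theorem explicit_formula_general (m ε : ℝ) (x t : ℤ)
    (hxt : |x| < t) (hpar : Even (x + t)) :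
    (am m ε x t).re =
      Real.sqrt (1 + m ^ 2 * ε ^ 2) ^ (1 - t) *
        ∑ r ∈ Finset.range (((t - |x|) / 2).toNat + 1),
          (-1 : ℝ) ^ r * (((x + t - 2) / 2).toNat.choose r : ℝ) *
            (((t - x - 2) / 2).toNat.choose r : ℝ) * (m * ε) ^ (2 * r + 1) ∧
    (am m ε x t).im =
      Real.sqrt (1 + m ^ 2 * ε ^ 2) ^ (1 - t) *
        ∑ r ∈ Finset.Icc 1 (((t - |x|) / 2).toNat),
          (-1 : ℝ) ^ r * (((x + t - 2) / 2).toNat.choose r : ℝ) *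
            (((t - x - 2) / 2).toNat.choose (r - 1) : ℝ) * (m * ε) ^ (2 * r) := by
  obtain ⟨a, b, rfl, rfl⟩ : ∃ a b : ℕ, x = a - b ∧ t = (a + b + 2 : ℕ) := by
    obtain ⟨k, hk⟩ := hpar
    obtain ⟨hx₁, hx₂⟩ := abs_lt.1 hxt
    exact ⟨(k - 1).toNat, (t - k - 1).toNat, by omega, by omega⟩
  have hmin : ((((a + b + 2 : ℕ) : ℤ) - |(a : ℤ) - b|) / 2).toNat = min a b + 1 := by
    rcases abs_cases ((a : ℤ) - b) with ⟨h, h'⟩ | ⟨h, h'⟩ <;> rw [h] <;> omega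
  have ha : (((a : ℤ) - b + (a + b + 2 : ℕ) - 2) / 2).toNat = a := by omega
  have hb : ((((a + b + 2 : ℕ) : ℤ) - (a - b) - 2) / 2).toNat = b := by omega
  rw [hmin, ha, hb]
  exact ⟨am_re_eq m ε a b, am_im_eq m ε a b⟩

/-- "Explicit" formula for the amplitudes in the model with mass (lattice coordinates). -/
theorem explicit_formula (m ε : ℝ) (hε : 0 < ε) (hm : 0 ≤ m) (x t : ℤ)
    (hxt : |x| < t) (hpar : Even (x + t)) :
    (am m ε x t).re =
      Real.sqrt (1 + m ^ 2 * ε ^ 2) ^ (1 - t) *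
        ∑ r ∈ Finset.range (((t - |x|) / 2).toNat + 1),
          (-1 : ℝ) ^ r * (((x + t - 2) / 2).toNat.choose r : ℝ) *
            (((t - x - 2) / 2).toNat.choose r : ℝ) * (m * ε) ^ (2 * r + 1) ∧
    (am m ε x t).im =
      Real.sqrt (1 + m ^ 2 * ε ^ 2) ^ (1 - t) *
        ∑ r ∈ Finset.Icc 1 (((t - |x|) / 2).toNat),
          (-1 : ℝ) ^ r * (((x + t - 2) / 2).toNat.choose r : ℝ) *
            (((t - x - 2) / 2).toNat.choose (r - 1) : ℝ) * (m * ε) ^ (2 * r) :=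
  explicit_formula_general m ε x t hxt hpar
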